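/- Every deterministic k-way branching program solving the Boolean binary tree evaluation problem BT_2^3(k) has at least k^3 / log k states, for all sufficiently large k. -/

import Mathlib

/-! ## Tree evaluation problems -/

/-- The `k`-valued input variables of the tree evaluation problem on the complete
`d`-ary tree with `h` levels: the single variable of a height-1 tree is its leaf
value; for a tree of height `h+2`, a variable is either an entry `f_root(args)`
of the root function's table, or a variable of one of the `d` principal subtrees. -/
inductive TEVar (d k : ℕ) : ℕ → Type where
  | leaf : TEVar d k 1
  | root {h : ℕ} (args : Fin d → Fin k) : TEVar d k (h + 2)
  | child {h : ℕ} (j : Fin d) (x : TEVar d k (h + 1)) : TEVar d k (h + 2)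

/-- The value of the root of the tree, computed bottom-up from an assignment of
values to all input variables. (For the degenerate height 0 it returns a junk value.) -/
def rootValue (d k : ℕ) (hk : 0 < k) : (h : ℕ) → (TEVar d k h → Fin k) → Fin k
  | 0, _ => ⟨0, hk⟩
  | 1, I => I .leaf
  | (h + 2), I => I (.root fun j => rootValue d k hk (h + 1) fun x => I (.child j x))

/-- The Boolean tree evaluation problem `BT_d^h(k)`: does the root have value 1
(represented by `(0 : Fin k)`)? -/
def BTfun (d k : ℕ) (hk : 0 < k) (h : ℕ) (I : TEVar d k h → Fin k) : Bool :=
  decide (rootValue d k hk h I = ⟨0, hk⟩)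

/-- `ThriftyVar d k hk h I v` holds iff querying variable `v` on input `I` is a
thrifty query: if `v` is an entry `f_i(args)` of the function table of an internal
node `i`, then `args` must be the tuple of correct values of the children of `i`. -/
def ThriftyVar (d k : ℕ) (hk : 0 < k) : (h : ℕ) → (TEVar d k h → Fin k) → TEVar d k h → Prop
  | 0, _, _ => True
  | 1, _, _ => True
  | (h + 2), I, .root args =>
      args = fun j => rootValue d k hk (h + 1) fun x => I (.child j x)
  | (h + 2), I, .child j x =>
      ThriftyVar d k hk (h + 1) (fun y => I (.child j y)) x

/-! ## k-way branching programs -/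

/-- A deterministic `k`-way branching program with input variables `V` (each taking
values in `[k] = Fin k`) and outputs in `R`. Each state is either a non-final state
labelled with the variable it queries (`Sum.inl v`), with `k` outedges given by
`next`, or a final state labelled with an output (`Sum.inr r`). -/
structure DBP (V : Type) (k : ℕ) (R : Type) where
  Q : Type
  fin : Fintype Q
  start : Q
  label : Q → V ⊕ R
  next : Q → Fin k → Q

namespace DBP

variable {V : Type} {k : ℕ} {R : Type}

/-- The size of a branching program is its number of states. -/
def size (B : DBP V k R) : ℕ := @Fintype.card B.Q B.fin

/-- One deterministic step on input `I` (final states are absorbing). -/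
def step (B : DBP V k R) (I : V → Fin k) (q : B.Q) : B.Q :=
  match B.label q with
  | .inl v => B.next q (I v)
  | .inr _ => q

/-- `B` computes the total function `f`: on every input, the computation reaches the
final state labelled with the correct output. -/
def Computes (B : DBP V k R) (f : (V → Fin k) → R) : Prop :=
  ∀ I : V → Fin k, ∃ t : ℕ, B.label ((B.step I)^[t] B.start) = .inr (f I)

end DBP

/-- A nondeterministic `k`-way branching program: as in `DBP`, but a non-final state
may have any number of outedges with any labels in `Fin k`, given by the edge
relation `edge q a q'`. -/
structure NBP (V : Type) (k : ℕ) (R : Type) where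
  Q : Type
  fin : Fintype Q
  start : Q
  label : Q → V ⊕ R
  edge : Q → Fin k → Q → Prop

namespace NBP

variable {V : Type} {k : ℕ} {R : Type}

/-- The size of a branching program is its number of states. -/
def size (B : NBP V k R) : ℕ := @Fintype.card B.Q B.fin

/-- One nondeterministic step on input `I`: follow an edge out of a non-final state
whose label matches the value of the queried variable. -/
def Step (B : NBP V k R) (I : V → Fin k) (q q' : B.Q) : Prop :=
  ∃ v, B.label q = .inl v ∧ B.edge q (I v) q'

/-- Some computation of `B` on input `I` ends in a final state labelled `r`. -/
def Outputs (B : NBP V k R) (I : V → Fin k) (r : R) : Prop :=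
  ∃ q, Relation.ReflTransGen (B.Step I) B.start q ∧ B.label q = .inr r

/-- `B` computes the total function `f`: on every input some computation ends in a
final state, and every computation ending in a final state ends in the one labelled
with the correct output. -/
def Computes (B : NBP V k R) (f : (V → Fin k) → R) : Prop :=
  ∀ (I : V → Fin k) (r : R), B.Outputs I r ↔ r = f I

end NBP

/-- A deterministic branching program for a tree evaluation problem is thrifty if on
every input, every query made during the computation is a thrifty query. -/
def DBPThrifty {R : Type} (d k h : ℕ) (hk : 0 < k) (B : DBP (TEVar d k h) k R) : Prop :=
  ∀ (I : TEVar d k h → Fin k) (t : ℕ) (v : TEVar d k h),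
    B.label ((B.step I)^[t] B.start) = .inl v → ThriftyVar d k hk h I v

/-- A nondeterministic branching program for a tree evaluation problem is thrifty if
for every input, every computation ending in a final state makes only thrifty
queries. -/
def NBPThrifty {R : Type} (d k h : ℕ) (hk : 0 < k) (B : NBP (TEVar d k h) k R) : Prop :=
  ∀ (I : TEVar d k h → Fin k) (n : ℕ) (path : ℕ → B.Q),
    path 0 = B.start →
    (∀ t < n, B.Step I (path t) (path (t + 1))) →
    (∃ r, B.label (path n) = .inr r) →
    ∀ t < n, ∀ v, B.label (path t) = .inl v → ThriftyVar d k hk h I v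

/-!
Fix `p ∈ [k]²` and let `S_p` be the two variables `f_2(p), f_3(p)`. Off `S_p`, an input
determines a table: for the start and for each state querying `S_p` and each answer, the next
state querying `S_p`, or the output. The output on an input depends only on its table and its
values on `S_p`. Setting all leaves to `p` and `f_1 = g`, the root value is
`g(f_2(p), f_3(p))`, so the `2^{k²}` Boolean functions `g` need distinct tables. With `s_p`
states querying `S_p` there are `(s_p + 3)^{s_p k + 1}` tables, whence `s_p ≥ k / log k`, and
the sets of states for the `k²` pairs `p` are disjoint.
-/

namespace DBP

variable {V : Type} {k : ℕ} {R : Type} (B : DBP V k R)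

instance : Finite B.Q := @Finite.of_fintype _ B.fin

theorem size_eq_natCard : B.size = Nat.card B.Q := (@Nat.card_eq_fintype_card _ B.fin).symm

def Reaches (I : V → Fin k) (q : B.Q) (r : R) : Prop :=
  ∃ t, B.label ((B.step I)^[t] q) = .inr r

variable {B} {I J : V → Fin k}

theorem step_of_label_eq_inl {q : B.Q} {v : V} (h : B.label q = .inl v) :
    B.step I q = B.next q (I v) := by
  rw [step, h]

theorem iterate_step_of_label_eq_inr {q : B.Q} {r : R} (h : B.label q = .inr r) (n : ℕ) :
    (B.step I)^[n] q = q :=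
  Function.iterate_fixed (by rw [step, h]) n

theorem Reaches.unique {q : B.Q} {r r' : R} (h : B.Reaches I q r) (h' : B.Reaches I q r') :
    r = r' := by
  obtain ⟨t, ht⟩ := h
  obtain ⟨t', ht'⟩ := h'
  wlog hle : t ≤ t' generalizing t t' r r'
  · exact (this t' ht' t ht (by omega)).symm
  rw [← Nat.sub_add_cancel hle, Function.iterate_add_apply,
    iterate_step_of_label_eq_inr ht, ht] at ht'
  exact Sum.inr_injective ht'

theorem Reaches.of_iterate {q : B.Q} {r : R} (m : ℕ) (h : B.Reaches I ((B.step I)^[m] q) r) :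
    B.Reaches I q r := by
  obtain ⟨t, ht⟩ := h
  exact ⟨t + m, by rwa [Function.iterate_add_apply]⟩

variable (B) (S : Set V)

def IsExit (q : B.Q) : Prop := ∀ v, B.label q = .inl v → v ∈ S

abbrev QueryState : Type := {q : B.Q // ∃ v ∈ S, B.label q = .inl v}

open Classical in
noncomputable def exitLabel (q : B.Q) : B.QueryState S ⊕ Option R :=
  if h : ∃ v ∈ S, B.label q = .inl v then .inl ⟨q, h⟩ else .inr (B.label q).getRight?

open Classical in
noncomputable def exit (I : V → Fin k) (q : B.Q) : B.QueryState S ⊕ Option R :=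
  if h : ∃ n, B.IsExit S ((B.step I)^[n] q) then B.exitLabel S ((B.step I)^[Nat.find h] q)
  else .inr none

abbrev Table : Type :=
  (B.QueryState S ⊕ Option R) × (B.QueryState S → Fin k → B.QueryState S ⊕ Option R)

noncomputable def table (I : V → Fin k) : B.Table S :=
  (B.exit S I B.start, fun z a => B.exit S I (B.next z.1 a))

variable {B S}

theorem iterate_step_eq_of_eqOn_compl (hIJ : Set.EqOn I J Sᶜ) {q : B.Q} {n : ℕ}
    (hn : ∀ j < n, ¬ B.IsExit S ((B.step I)^[j] q)) :
    (B.step I)^[n] q = (B.step J)^[n] q := by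
  induction n with
  | zero => rfl
  | succ n ih =>
    rw [Function.iterate_succ_apply', Function.iterate_succ_apply',
      ← ih fun j hj => hn j (by omega)]
    obtain ⟨v, hv, hvS⟩ : ∃ v, B.label ((B.step I)^[n] q) = .inl v ∧ v ∉ S := by
      simpa [IsExit] using hn n (by omega)
    rw [step_of_label_eq_inl hv, step_of_label_eq_inl hv, hIJ hvS]

theorem exit_congr (hIJ : Set.EqOn I J Sᶜ) (q : B.Q) : B.exit S I q = B.exit S J q := by
  classical
  by_cases hI : ∃ n, B.IsExit S ((B.step I)^[n] q)
  · have hmin : ∀ j < Nat.find hI, ¬ B.IsExit S ((B.step I)^[j] q) := fun j => Nat.find_min hI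
    have heq : ∀ j ≤ Nat.find hI, (B.step I)^[j] q = (B.step J)^[j] q := fun j hj =>
      iterate_step_eq_of_eqOn_compl hIJ fun i hi => hmin i (by omega)
    have hJ : ∃ n, B.IsExit S ((B.step J)^[n] q) := ⟨_, heq _ le_rfl ▸ Nat.find_spec hI⟩
    have hfind : Nat.find hJ = Nat.find hI := (Nat.find_eq_iff hJ).2
      ⟨heq _ le_rfl ▸ Nat.find_spec hI, fun j hj => heq j hj.le ▸ hmin j hj⟩
    rw [exit, exit, dif_pos hI, dif_pos hJ, hfind, heq _ le_rfl]
  · have hJ : ¬ ∃ n, B.IsExit S ((B.step J)^[n] q) := by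
      push Not at hI ⊢
      exact fun n => iterate_step_eq_of_eqOn_compl hIJ (fun j _ => hI j) ▸ hI n
    rw [exit, exit, dif_neg hI, dif_neg hJ]

theorem table_congr (hIJ : Set.EqOn I J Sᶜ) : B.table S I = B.table S J := by
  unfold table
  rw [exit_congr hIJ]
  congr
  funext z a
  exact exit_congr hIJ _

theorem exists_iterate_eq_of_exit_eq_inl {q : B.Q} {z : B.QueryState S}
    (h : B.exit S I q = .inl z) : ∃ m, (B.step I)^[m] q = z.1 := by
  classical
  unfold exit at h
  split_ifs at h with hex
  refine ⟨Nat.find hex, ?_⟩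
  unfold exitLabel at h
  split_ifs at h
  cases h
  rfl

theorem reaches_of_exit_eq_inr {q : B.Q} {r : R} (h : B.exit S I q = .inr (some r)) :
    B.Reaches I q r := by
  classical
  unfold exit at h
  split_ifs at h with hex
  · refine ⟨Nat.find hex, ?_⟩
    unfold exitLabel at h
    split_ifs at h
    cases h' : B.label ((B.step I)^[Nat.find hex] q) with
    | inl v => exact absurd (Nat.find_spec hex v h') fun hv => by simp_all
    | inr r' => simp_all
  · simp at h

theorem exit_of_label_iterate_eq_inr {q : B.Q} {n : ℕ} {r : R}
    (hn : B.label ((B.step I)^[n] q) = .inr r) :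
    ∃ m ≤ n, B.IsExit S ((B.step I)^[m] q) ∧
      B.exit S I q = B.exitLabel S ((B.step I)^[m] q) := by
  classical
  have hex : ∃ n, B.IsExit S ((B.step I)^[n] q) := ⟨n, fun v hv => by simp_all⟩
  exact ⟨Nat.find hex, Nat.find_min' hex fun v hv => by simp_all, Nat.find_spec hex,
    by rw [exit, dif_pos hex]⟩

theorem reaches_of_exit_eq (hS : Set.EqOn I J S)
    (hnext : ∀ (z : B.QueryState S) a, B.exit S I (B.next z.1 a) = B.exit S J (B.next z.1 a))
    {r : R} (n : ℕ) {q q' : B.Q} (hn : B.label ((B.step I)^[n] q) = .inr r)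
    (hqq' : B.exit S I q = B.exit S J q') : B.Reaches J q' r := by
  induction n using Nat.strong_induction_on generalizing q q' with
  | _ n ih =>
  obtain ⟨m, hmn, hm, hexit⟩ := exit_of_label_iterate_eq_inr hn
  set z := (B.step I)^[m] q
  by_cases hz : ∃ v ∈ S, B.label z = .inl v
  · obtain ⟨v, hvS, hv⟩ := hz
    rw [hexit, exitLabel, dif_pos ⟨v, hvS, hv⟩] at hqq'
    obtain ⟨m', hm'⟩ := exists_iterate_eq_of_exit_eq_inl hqq'.symm
    have hlt : m < n := lt_of_le_of_ne hmn fun h => by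
      subst h; exact Sum.inl_ne_inr (hv.symm.trans hn)
    have hI : (B.step I)^[m + 1] q = B.next z (I v) := by
      rw [Function.iterate_succ_apply', step_of_label_eq_inl hv]
    have hJ : (B.step J)^[m' + 1] q' = B.next z (I v) := by
      rw [Function.iterate_succ_apply', hm', step_of_label_eq_inl hv, hS hvS]
    have hn' : B.label ((B.step I)^[n - (m + 1)] (B.next z (I v))) = .inr r := by
      rwa [← hI, ← Function.iterate_add_apply, Nat.sub_add_cancel hlt]
    exact Reaches.of_iterate (m' + 1) (hJ ▸ ih _ (by omega) hn' (hnext ⟨z, v, hvS, hv⟩ (I v)))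
  · obtain ⟨r', hr'⟩ : ∃ r', B.label z = .inr r' := by
      cases h : B.label z with
      | inl v => exact absurd ⟨v, hm v h, h⟩ hz
      | inr r' => exact ⟨r', rfl⟩
    obtain rfl : r' = r := Reaches.unique ⟨m, hr'⟩ ⟨n, hn⟩
    rw [hexit, exitLabel, dif_neg hz, hr'] at hqq'
    exact reaches_of_exit_eq_inr hqq'.symm

theorem Computes.eq_of_table_eq {f : (V → Fin k) → R} (hB : B.Computes f) (hS : Set.EqOn I J S)
    (hT : B.table S I = B.table S J) : f I = f J := by
  obtain ⟨n, hn⟩ := hB I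
  have hnext (z : B.QueryState S) (a : Fin k) :=
    congrFun (congrFun (congrArg Prod.snd hT) z) a
  exact Reaches.unique (reaches_of_exit_eq hS hnext n hn (congrArg Prod.fst hT)) (hB J)

theorem card_table [Finite R] : Nat.card (B.Table S) =
    (Nat.card (B.QueryState S) + Nat.card R + 1) ^ (Nat.card (B.QueryState S) * k + 1) := by
  simp only [Table, Nat.card_prod, Nat.card_fun, Nat.card_sum, Finite.card_option,
    Nat.card_eq_fintype_card (α := Fin k), Fintype.card_fin]
  ring

variable (B) in
theorem sum_card_queryState_le {ι : Type} [Fintype ι] (S : ι → Set V)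
    (hS : Pairwise fun i j => Disjoint (S i) (S j)) :
    ∑ i, Nat.card (B.QueryState (S i)) ≤ B.size := by
  rw [← Nat.card_sigma, size_eq_natCard]
  refine Nat.card_le_card_of_injective (fun x => x.2.1) ?_
  rintro ⟨i, q, v, hv, hq⟩ ⟨j, q', v', hv', hq'⟩ (rfl : q = q')
  obtain rfl : v = v' := Sum.inl_injective (hq.symm.trans hq')
  obtain rfl : i = j := by_contra fun hij => Set.disjoint_left.1 (hS hij) hv hv'
  rfl

end DBP

namespace BT23

variable {k : ℕ}

/-- The entry `f_{j+2}(p)`, at `p`, of the function of the `j`-th child of the root. -/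
def blockVar (p : Fin 2 → Fin k) (j : Fin 2) : TEVar 2 k 3 := .child j (.root p)

def block (p : Fin 2 → Fin k) : Set (TEVar 2 k 3) := Set.range (blockVar p)

theorem pairwise_disjoint_block :
    Pairwise fun p p' : Fin 2 → Fin k => Disjoint (block p) (block p') := by
  intro p p' hpp'
  rw [Set.disjoint_left]
  rintro _ ⟨j, rfl⟩ ⟨j', h⟩
  simp only [blockVar, TEVar.child.injEq, TEVar.root.injEq] at h
  exact hpp' h.2.symm

/-- The leaves are `p`, so both children of the root are evaluated at `p`, where their tables
are `w`; all other entries of their tables are `0`, and the root table encodes `g`. -/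
def hardInput (hk : 2 ≤ k) (p : Fin 2 → Fin k) (g : (Fin 2 → Fin k) → Bool)
    (w : Fin 2 → Fin k) : TEVar 2 k 3 → Fin k
  | .root a => if g a then ⟨0, Nat.zero_lt_of_lt hk⟩ else ⟨1, hk⟩
  | .child j (.root q) => if q = p then w j else ⟨0, Nat.zero_lt_of_lt hk⟩
  | .child _ (.child j .leaf) => p j

variable (hk : 2 ≤ k) (p : Fin 2 → Fin k)

theorem BTfun_hardInput (g : (Fin 2 → Fin k) → Bool) (w : Fin 2 → Fin k) :
    BTfun 2 k (Nat.zero_lt_of_lt hk) 3 (hardInput hk p g w) = g w := by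
  cases h : g w <;> simp [BTfun, rootValue, hardInput, h]

theorem hardInput_eqOn_block (g g' : (Fin 2 → Fin k) → Bool) (w : Fin 2 → Fin k) :
    Set.EqOn (hardInput hk p g w) (hardInput hk p g' w) (block p) := by
  rintro _ ⟨j, rfl⟩
  simp [hardInput, blockVar]

theorem hardInput_eqOn_compl_block (g : (Fin 2 → Fin k) → Bool) (w w' : Fin 2 → Fin k) :
    Set.EqOn (hardInput hk p g w) (hardInput hk p g w') (block p)ᶜ := by
  intro v hv
  match v with
  | .root a => rfl
  | .child j (.root q) =>
    have hq : q ≠ p := by rintro rfl; exact hv ⟨j, rfl⟩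
    simp [hardInput, hq]
  | .child _ (.child _ .leaf) => rfl

theorem two_pow_sq_le {B : DBP (TEVar 2 k 3) k Bool}
    (hB : B.Computes (BTfun 2 k (Nat.zero_lt_of_lt hk) 3)) :
    2 ^ k ^ 2 ≤ (Nat.card (B.QueryState (block p)) + 3) ^
      (Nat.card (B.QueryState (block p)) * k + 1) := by
  have hinj : Function.Injective fun g => B.table (block p) (hardInput hk p g p) := by
    intro g g' h
    funext w
    rw [← BTfun_hardInput hk p g w, ← BTfun_hardInput hk p g' w]
    refine hB.eq_of_table_eq (hardInput_eqOn_block hk p g g' w) ?_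
    exact (DBP.table_congr (hardInput_eqOn_compl_block hk p g w p)).trans
      (h.trans (DBP.table_congr (hardInput_eqOn_compl_block hk p g' p w)))
  have hcard := Nat.card_le_card_of_injective _ hinj
  rw [DBP.card_table] at hcard
  simpa using hcard

end BT23

theorem div_logb_le_of_two_pow_sq_le {k s : ℕ} (hk : 16 ≤ k)
    (h : 2 ^ k ^ 2 ≤ (s + 3) ^ (s * k + 1)) : (k : ℝ) / Real.logb 2 k ≤ s := by
  set L := Real.logb 2 k
  have hk' : (16 : ℝ) ≤ k := by exact_mod_cast hk
  have hL : 4 ≤ L := by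
    rw [Real.le_logb_iff_rpow_le one_lt_two (by linarith)]
    norm_num [hk']
  have hLk : L ≤ k := by
    rw [Real.logb_le_iff_le_rpow one_lt_two (by linarith), Real.rpow_natCast]
    exact_mod_cast Nat.lt_two_pow_self.le
  have hlog : (k : ℝ) ^ 2 ≤ (s * k + 1) * Real.logb 2 (s + 3) := by
    have h' : (2 : ℝ) ^ k ^ 2 ≤ ((s : ℝ) + 3) ^ (s * k + 1) := by exact_mod_cast h
    have := Real.logb_le_logb_of_le one_lt_two (by positivity) h'
    rw [Real.logb_pow, Real.logb_pow, Real.logb_self_eq_one one_lt_two] at this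
    push_cast at this
    linarith
  by_contra! hs
  have hsL : s * L < k := (lt_div_iff₀ (by linarith)).1 hs
  have hs3 : Real.logb 2 (s + 3) ≤ L - 1 := by
    have hle : (s : ℝ) + 3 ≤ k / 2 := by nlinarith
    have := Real.logb_le_logb_of_le one_lt_two (by positivity) hle
    rwa [Real.logb_div (by linarith) two_ne_zero, Real.logb_self_eq_one one_lt_two] at this
  have hk2 : (k : ℝ) ^ 2 ≤ (s * k + 1) * (L - 1) :=
    hlog.trans (mul_le_mul_of_nonneg_left hs3 (by positivity))
  rcases Nat.eq_zero_or_pos s with rfl | hs1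
  · push_cast at hk2
    nlinarith
  · have hs1' : (1 : ℝ) ≤ s := by exact_mod_cast hs1
    nlinarith [mul_lt_mul_of_pos_right hsL (show (0 : ℝ) < k by linarith)]

/-- For all sufficiently large `k`, every deterministic `k`-way branching program
solving `BT_2^3(k)` has at least `k^3 / log k` states. -/
theorem det_BT23_lower :
    ∃ K : ℕ, ∀ k : ℕ, K ≤ k → ∀ hk : 2 ≤ k,
      ∀ B : DBP (TEVar 2 k 3) k Bool,
        B.Computes (BTfun 2 k (by omega) 3) →
        (k : ℝ) ^ 3 / Real.logb 2 (k : ℝ) ≤ (B.size : ℝ) := by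
  refine ⟨16, fun k hK hk B hB => ?_⟩
  calc (k : ℝ) ^ 3 / Real.logb 2 k = ∑ _p : Fin 2 → Fin k, (k : ℝ) / Real.logb 2 k := by
        simp only [Finset.sum_const, Finset.card_univ, Fintype.card_fun, Fintype.card_fin,
          nsmul_eq_mul]
        push_cast
        ring
    _ ≤ ∑ p, (Nat.card (B.QueryState (BT23.block p)) : ℝ) := Finset.sum_le_sum fun p _ =>
        div_logb_le_of_two_pow_sq_le hK (BT23.two_pow_sq_le hk p hB)
    _ ≤ B.size := mod_cast B.sum_card_queryState_le BT23.block BT23.pairwise_disjoint_block
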